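/- arXiv:2310.01303 — 6 statements merged into one kernel-verified Lean document; each statement's English description precedes it below -/
import Mathlib

section
/- Let R be a rotation of the circle ℝ/ℤ with angle α ≠ 0 (mod 1). Fix t ∈ ℝ/ℤ and let K be the shortest closed arc joining t to R(t). Then for every s ∈ ℝ/ℤ, the forward R-orbit of s intersects K. -/
/-!
Lift the angle to `a ∈ [-1/2, 1/2]`; reflecting `x ↦ -x` turns a rotation by `a` into one by `-a`,
so assume `a > 0`. Then the shortest arc from `t` to `t + α` is the image of `[t, t + a]`, an
interval of length `a`, and the lifted orbit `s + n a` of a lift `s ≤ t` advances in steps of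
exactly `a`, so it cannot jump over that interval.
-/

open Set

theorem exists_nat_add_mul_mem_Ico {K : Type*} [Field K] [LinearOrder K] [IsStrictOrderedRing K]
    [FloorSemiring K] {a s t : K} (ha : 0 < a) (hst : s ≤ t) :
    ∃ n : ℕ, s + n * a ∈ Ico t (t + a) := by
  have hx : 0 ≤ (t - s) / a := div_nonneg (sub_nonneg.2 hst) ha.le
  refine ⟨⌈(t - s) / a⌉₊, ?_, ?_⟩
  · have := mul_le_mul_of_nonneg_right (Nat.le_ceil ((t - s) / a)) ha.le
    rw [div_mul_cancel₀ _ ha.ne'] at this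
    linarith
  · have := mul_lt_mul_of_pos_right (Nat.ceil_lt_add_one hx) ha
    rw [add_mul, div_mul_cancel₀ _ ha.ne', one_mul] at this
    linarith

namespace AddCircle

variable {p : ℝ}

theorem exists_coe_eq_abs_le_half_period (hp : p ≠ 0) (α : AddCircle p) :
    ∃ a : ℝ, (a : AddCircle p) = α ∧ |a| ≤ |p| / 2 := by
  induction α using QuotientAddGroup.induction_on with | H x => ?_
  refine ⟨x - round (p⁻¹ * x) * p, ?_, ?_⟩
  · rw [coe_sub, sub_eq_self, coe_eq_zero_iff]
    exact ⟨round (p⁻¹ * x), zsmul_eq_mul _ _⟩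
  · rw [← norm_eq]
    exact norm_le_half_period p hp

theorem dist_coe_coe_eq_abs_sub (hp : p ≠ 0) {x y : ℝ} (h : |x - y| ≤ |p| / 2) :
    dist (x : AddCircle p) y = |x - y| := by
  rw [dist_eq_norm, ← coe_sub, norm_coe_eq_abs_iff p hp]
  exact h

theorem dist_add_dist_eq_of_mem_Icc (hp : p ≠ 0) {a t y : ℝ} (ha : a ≤ |p| / 2)
    (hy : y ∈ Icc t (t + a)) :
    dist (y : AddCircle p) t + dist (y : AddCircle p) (t + a) = dist (t : AddCircle p) (t + a) := by
  obtain ⟨hty, hya⟩ := hy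
  rw [← coe_add, dist_coe_coe_eq_abs_sub hp, dist_coe_coe_eq_abs_sub hp,
    dist_coe_coe_eq_abs_sub hp]
  · rw [abs_of_nonneg (sub_nonneg.2 hty), abs_of_nonpos (sub_nonpos.2 hya),
      abs_of_nonpos (by linarith)]
    ring
  all_goals rw [abs_le]; constructor <;> linarith

theorem exists_nsmul_dist_add_dist_eq_of_pos (hp : 0 < p) {a : ℝ} (ha : 0 < a) (hap : a ≤ p / 2)
    (s t : AddCircle p) :
    ∃ n : ℕ, dist (s + n • (a : AddCircle p)) t + dist (s + n • (a : AddCircle p)) (t + a) =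
      dist t (t + a) := by
  induction s using QuotientAddGroup.induction_on with | H s => ?_
  induction t using QuotientAddGroup.induction_on with | H t => ?_
  obtain ⟨m, hm⟩ := exists_nat_ge ((s - t) / p)
  have hsm : s - m * p ≤ t := by
    have := (div_le_iff₀ hp).1 hm
    linarith
  obtain ⟨n, hn⟩ := exists_nat_add_mul_mem_Ico ha hsm
  have horbit : ((s - m * p + n * a : ℝ) : AddCircle p) = s + n • (a : AddCircle p) := by
    rw [coe_add, coe_sub, ← nsmul_eq_mul, ← nsmul_eq_mul, coe_nsmul, coe_nsmul, coe_period,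
      nsmul_zero, sub_zero]
  refine ⟨n, ?_⟩
  rw [← horbit]
  exact dist_add_dist_eq_of_mem_Icc hp.ne' (by rwa [abs_of_pos hp]) (Ico_subset_Icc_self hn)

theorem exists_nsmul_dist_add_dist_eq (hp : 0 < p) {α : AddCircle p} (hα : α ≠ 0)
    (s t : AddCircle p) :
    ∃ n : ℕ, dist (s + n • α) t + dist (s + n • α) (t + α) = dist t (t + α) := by
  obtain ⟨a, rfl, ha⟩ := exists_coe_eq_abs_le_half_period hp.ne' α
  rw [abs_of_pos hp] at ha
  have ha0 : a ≠ 0 := by rintro rfl; exact hα (by simp)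
  rcases ha0.lt_or_gt with hneg | hpos
  · obtain ⟨n, hn⟩ := exists_nsmul_dist_add_dist_eq_of_pos hp (neg_pos.2 hneg)
      (by linarith [neg_abs_le a]) (-s) (-t)
    refine ⟨n, ?_⟩
    simpa only [coe_neg, ← neg_add, smul_neg, dist_neg_neg] using hn
  · exact exists_nsmul_dist_add_dist_eq_of_pos hp hpos (le_of_abs_le ha) s t

end AddCircle

/-- Let `R` be the rotation of the circle `ℝ/ℤ` by an angle `α ≠ 0`, and let `t` be a
point. The shortest closed arc `K` joining `t` to `R t = t + α` consists of the points
`y` with `dist y t + dist y (t + α) = dist t (t + α)`. Then the forward `R`-orbit of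
any point `s` meets `K`. -/
theorem rotation_orbit_meets_shortest_arc
    (α : AddCircle (1 : ℝ)) (hα : α ≠ 0) (t s : AddCircle (1 : ℝ)) :
    ∃ n : ℕ, dist (s + n • α) t + dist (s + n • α) (t + α) = dist t (t + α) :=
  AddCircle.exists_nsmul_dist_add_dist_eq one_pos hα s t
end

section
/- Let A be an n×n matrix with integer entries all of whose complex eigenvalues have absolute value at most 1. Then every eigenvalue of A which is nonzero is a root of unity (Kronecker's lemma for integer matrices: an algebraic integer all of whose Galois conjugates lie on the closed unit disc and which is nonzero on the unit circle is a root of unity; applied to the invertible case A ∈ GL_n(ℤ), all eigenvalues are roots of unity). -/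
open Polynomial NNReal IntermediateField

/-- All complex roots of the minimal polynomial (over ℚ) of a nonzero algebraic
integer whose conjugates all have norm at most 1 have norm exactly 1. -/
lemma kronecker_aux {μ : ℂ} (hμint : IsIntegral ℤ μ) (hμ0 : μ ≠ 0)
    (hle : ∀ z : ℂ, ((minpoly ℚ μ).map (algebraMap ℚ ℂ)).IsRoot z → ‖z‖ ≤ 1) :
    ∀ z : ℂ, ((minpoly ℚ μ).map (algebraMap ℚ ℂ)).IsRoot z → ‖z‖ = 1 := by
  classical
  have hμintℚ : IsIntegral ℚ μ := hμint.tower_top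
  set q : ℂ[X] := (minpoly ℚ μ).map (algebraMap ℚ ℂ) with hq
  have hqmonic : q.Monic := (minpoly.monic hμintℚ).map _
  have hqsplits : q.Splits := IsAlgClosed.splits q
  have hcard : Multiset.card q.roots = q.natDegree := (splits_iff_card_roots.mp hqsplits)
  have hqeq : (q.roots.map fun a => X - C a).prod = q :=
    prod_multiset_X_sub_C_of_monic_of_roots_card_eq hqmonic hcard
  have h_map := minpoly.isIntegrallyClosed_eq_field_fractions' ℚ hμint
  set c : ℤ := (minpoly ℤ μ).coeff 0 with hc
  have hcne : c ≠ 0 := by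
    intro h
    apply minpoly.coeff_zero_ne_zero hμintℚ hμ0
    rw [h_map, coeff_map]
    rw [← hc, h]
    simp
  have hq0 : q.coeff 0 = (c : ℂ) := by
    rw [hq, coeff_map, h_map, coeff_map, ← hc]
    simp
  have hcoeff : q.coeff 0 = (q.roots.map fun a => -a).prod := by
    conv_lhs => rw [← hqeq]
    rw [coeff_zero_eq_eval_zero, eval_multiset_prod, Multiset.map_map]
    congr 1
    apply Multiset.map_congr rfl
    intro a _
    simp
  have hprod : ‖q.coeff 0‖₊ = (q.roots.map fun a => ‖a‖₊).prod := by
    rw [hcoeff,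
      show (‖(Multiset.map (fun a : ℂ => -a) q.roots).prod‖₊)
          = ((q.roots.map fun a : ℂ => -a).map fun a => ‖a‖₊).prod from
        map_multiset_prod (nnnormHom.toMonoidHom : ℂ →* ℝ≥0) _,
      Multiset.map_map]
    congr 1
    apply Multiset.map_congr rfl
    intro a _
    simp [nnnormHom]
  have hone : (1 : ℝ≥0) ≤ ‖q.coeff 0‖₊ := by
    rw [hq0]
    have h1 : (1 : ℝ) ≤ ‖(c : ℂ)‖ := by
      rw [Complex.norm_intCast]
      exact_mod_cast Int.one_le_abs hcne
    rwa [← NNReal.coe_le_coe, coe_nnnorm, NNReal.coe_one]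
  intro z hz
  have hzmem : z ∈ q.roots := by
    rw [mem_roots hqmonic.ne_zero]; exact hz
  have hrest : ((q.roots.erase z).map fun a => ‖a‖₊).prod ≤ 1 := by
    have := Multiset.prod_le_pow_card ((q.roots.erase z).map fun a => ‖a‖₊) 1 ?_
    · simpa using this
    · intro x hx
      obtain ⟨a, ha, rfl⟩ := Multiset.mem_map.mp hx
      have haroot : q.IsRoot a := isRoot_of_mem_roots (Multiset.mem_of_mem_erase ha)
      have h2 := hle a haroot
      rw [← NNReal.coe_le_coe, coe_nnnorm, NNReal.coe_one]
      simpa using h2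
  have hsplit : (q.roots.map fun a => ‖a‖₊).prod
      = ‖z‖₊ * ((q.roots.erase z).map fun a => ‖a‖₊).prod := by
    conv_lhs => rw [← Multiset.cons_erase hzmem]
    simp
  have h1 : (1 : ℝ≥0) ≤ ‖z‖₊ := by
    calc (1 : ℝ≥0) ≤ ‖q.coeff 0‖₊ := hone
    _ = ‖z‖₊ * ((q.roots.erase z).map fun a => ‖a‖₊).prod := by rw [hprod, hsplit]
    _ ≤ ‖z‖₊ * 1 := by gcongr
    _ = ‖z‖₊ := mul_one _
  have h2 := hle z hz
  have h1' : (1 : ℝ) ≤ ‖z‖ := by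
    rw [← NNReal.coe_le_coe, NNReal.coe_one, coe_nnnorm] at h1
    simpa using h1
  linarith

/-- Kronecker's lemma for integer matrices: if all complex eigenvalues of an integer
matrix `A` have absolute value at most 1, then every nonzero eigenvalue of `A`
is a root of unity. -/
theorem kronecker_integer_matrix {n : ℕ} (A : Matrix (Fin n) (Fin n) ℤ)
    (hbound : ∀ μ : ℂ, (A.map (Int.cast : ℤ → ℂ)).charpoly.IsRoot μ →
      ‖μ‖ ≤ 1) :
    ∀ μ : ℂ, (A.map (Int.cast : ℤ → ℂ)).charpoly.IsRoot μ → μ ≠ 0 →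
      ∃ m : ℕ, 0 < m ∧ μ ^ m = 1 := by
  intro μ hroot hμ0
  have hAmap : A.map (Int.cast : ℤ → ℂ) = A.map (Int.castRingHom ℂ) := rfl
  have hcharmap : (A.map (Int.cast : ℤ → ℂ)).charpoly
      = A.charpoly.map (Int.castRingHom ℂ) := by
    rw [hAmap]; exact Matrix.charpoly_map A (Int.castRingHom ℂ)
  have haeval : Polynomial.aeval μ A.charpoly = 0 := by
    rw [aeval_def, ← eval_map]
    rw [hcharmap] at hroot
    exact hroot
  have hμint : IsIntegral ℤ μ := ⟨A.charpoly, A.charpoly_monic, haeval⟩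
  have hμintℚ : IsIntegral ℚ μ := hμint.tower_top
  have hle : ∀ z : ℂ, ((minpoly ℚ μ).map (algebraMap ℚ ℂ)).IsRoot z → ‖z‖ ≤ 1 := by
    intro z hz
    apply hbound
    have h_map := minpoly.isIntegrallyClosed_eq_field_fractions' ℚ hμint
    have hpdvd : minpoly ℤ μ ∣ A.charpoly := minpoly.isIntegrallyClosed_dvd hμint haeval
    obtain ⟨r, hr⟩ := hpdvd
    rw [hcharmap, hr, Polynomial.map_mul]
    have hz' : ((minpoly ℤ μ).map (Int.castRingHom ℂ)).IsRoot z := by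
      have heq : (minpoly ℚ μ).map (algebraMap ℚ ℂ) = (minpoly ℤ μ).map (Int.castRingHom ℂ) := by
        rw [h_map, Polynomial.map_map]
        congr 1
      rwa [heq] at hz
    exact Polynomial.root_mul_right_of_isRoot (r.map (Int.castRingHom ℂ)) hz'
  have habs := kronecker_aux hμint hμ0 hle
  have hfd : FiniteDimensional ℚ ℚ⟮μ⟯ := IntermediateField.adjoin.finiteDimensional hμintℚ
  have hnf : NumberField ℚ⟮μ⟯ := { to_charZero := inferInstance, to_finiteDimensional := hfd }
  set x : ℚ⟮μ⟯ := IntermediateField.AdjoinSimple.gen ℚ μ with hx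
  have hgen : algebraMap ℚ⟮μ⟯ ℂ x = μ := IntermediateField.AdjoinSimple.algebraMap_gen ℚ μ
  have hxint : IsIntegral ℤ x := by
    have h := isIntegral_algHom_iff (IsScalarTower.toAlgHom ℤ ℚ⟮μ⟯ ℂ)
      (algebraMap ℚ⟮μ⟯ ℂ).injective (A := ℚ⟮μ⟯) (x := x)
    apply h.mp
    simpa [IsScalarTower.toAlgHom_apply, hgen] using hμint
  have hnorm : ∀ φ : ℚ⟮μ⟯ →+* ℂ, ‖φ x‖ = 1 := by
    intro φ
    have hmem : φ x ∈ (minpoly ℚ x).rootSet ℂ := by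
      have hr := NumberField.Embeddings.range_eval_eq_rootSet_minpoly ℚ⟮μ⟯ ℂ x
      rw [← hr]
      exact ⟨φ, rfl⟩
    erw [hx, minpoly_gen ℚ μ] at hmem
    have hroot' : ((minpoly ℚ μ).map (algebraMap ℚ ℂ)).IsRoot (φ x) := by
      rw [mem_rootSet] at hmem
      rw [IsRoot, eval_map, ← aeval_def]
      exact hmem.2
    have := habs (φ x) hroot'
    simpa using this
  obtain ⟨m, hm, hpow⟩ := NumberField.Embeddings.pow_eq_one_of_norm_eq_one ℚ⟮μ⟯ ℂ hxint hnorm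
  refine ⟨m, hm, ?_⟩
  calc μ ^ m = algebraMap ℚ⟮μ⟯ ℂ (x ^ m) := by rw [map_pow, hgen]
  _ = 1 := by rw [hpow, map_one]
end

section
/- Let V be a finite-dimensional real vector space equipped with a non-degenerate symmetric bilinear form of signature (1, n−1), and let f be an isometry of this form admitting a real eigenvalue λ > 1. Then: (a) the λ-eigenspace is an isotropic line; (b) λ⁻¹ is also an eigenvalue of f with isotropic eigenline; (c) every other eigenvalue of f (over ℂ) has modulus 1. -/
open Module
open Finset Matrix

/-- An isotropic vector (for the standard Minkowski form on coordinates) whose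
time component vanishes is zero. -/
lemma mink_zero {n : ℕ} (u : Fin (n+1) → ℝ)
    (h : ∑ i, (if i = 0 then (1:ℝ) else -1) * (u i * u i) = 0) (h0 : u 0 = 0) :
    u = 0 := by
  have key : ∑ i, u i * u i = 0 := by
    have h2 : ∑ i, (if i = 0 then (1:ℝ) else -1) * (u i * u i) = -∑ i, u i * u i := by
      rw [← Finset.sum_neg_distrib]
      refine Finset.sum_congr rfl fun i _ => ?_
      by_cases hi : i = 0
      · subst hi; rw [h0]; ring
      · simp [hi]
    rw [h2] at h
    linarith
  funext i
  have := (Finset.sum_eq_zero_iff_of_nonneg (fun i _ => mul_self_nonneg (u i))).mp key i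
    (Finset.mem_univ i)
  exact mul_self_eq_zero.mp this

/-- Two isotropic, mutually orthogonal vectors in Minkowski space are collinear. -/
lemma mink_collinear {n : ℕ} (u v : Fin (n+1) → ℝ)
    (huu : ∑ i, (if i = 0 then (1:ℝ) else -1) * (u i * u i) = 0)
    (hvv : ∑ i, (if i = 0 then (1:ℝ) else -1) * (v i * v i) = 0)
    (huv : ∑ i, (if i = 0 then (1:ℝ) else -1) * (u i * v i) = 0)
    (hu : u ≠ 0) :
    ∃ c : ℝ, v = c • u := by
  have hu0 : u 0 ≠ 0 := fun h => hu (mink_zero u huu h)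
  set w : Fin (n+1) → ℝ := fun i => u 0 * v i - v 0 * u i with hwdef
  have hw0 : w 0 = 0 := by simp [hwdef]; ring
  have hww : ∑ i, (if i = 0 then (1:ℝ) else -1) * (w i * w i) = 0 := by
    have expand : ∀ i : Fin (n+1), (if i = 0 then (1:ℝ) else -1) * (w i * w i)
        = (u 0 * u 0) * ((if i = 0 then (1:ℝ) else -1) * (v i * v i))
          - (2 * (u 0) * (v 0)) * ((if i = 0 then (1:ℝ) else -1) * (u i * v i))
          + (v 0 * v 0) * ((if i = 0 then (1:ℝ) else -1) * (u i * u i)) := by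
      intro i; simp only [hwdef]; ring
    rw [Finset.sum_congr rfl (fun i _ => expand i), Finset.sum_add_distrib,
      Finset.sum_sub_distrib, ← Finset.mul_sum, ← Finset.mul_sum, ← Finset.mul_sum,
      hvv, huv, huu]
    ring
  have hwz := mink_zero w hww hw0
  refine ⟨v 0 / u 0, ?_⟩
  funext i
  have hwi : u 0 * v i - v 0 * u i = 0 := by
    have := congrFun hwz i; simpa [hwdef] using this
  have : v i = (v 0 / u 0) * u i := by field_simp; linarith
  simpa using this

/-- The complexified Minkowski form on coordinates. -/
noncomputable def mQ {n : ℕ} (x y : Fin (n+1) → ℂ) : ℂ :=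
  ∑ i, (if i = 0 then (1:ℂ) else -1) * (x i * y i)

lemma mQ_dot {n : ℕ} (x y : Fin (n+1) → ℂ) :
    mQ x y = x ⬝ᵥ ((Matrix.diagonal fun i : Fin (n+1) => if i = 0 then (1:ℂ) else -1) *ᵥ y) := by
  unfold mQ dotProduct
  refine Finset.sum_congr rfl fun i _ => ?_
  rw [Matrix.mulVec_diagonal]
  ring

lemma mQ_iso {n : ℕ} (Ac : Matrix (Fin (n+1)) (Fin (n+1)) ℂ)
    (hAJAc : ∀ j k, ∑ i, (if i = 0 then (1:ℂ) else -1) * (Ac i j * Ac i k)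
      = if j = k then (if j = 0 then (1:ℂ) else -1) else 0)
    (x y : Fin (n+1) → ℂ) :
    mQ (Ac *ᵥ x) (Ac *ᵥ y) = mQ x y := by
  set J : Matrix (Fin (n+1)) (Fin (n+1)) ℂ :=
    Matrix.diagonal fun i : Fin (n+1) => if i = 0 then (1:ℂ) else -1 with hJdef
  have hJmat : Acᵀ * J * Ac = J := by
    ext j k
    have h := hAJAc j k
    have h1 : (Acᵀ * J * Ac) j k = ∑ l, (if l = 0 then (1:ℂ) else -1) * (Ac l j * Ac l k) := by
      rw [Matrix.mul_apply]
      refine Finset.sum_congr rfl fun l _ => ?_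
      rw [Matrix.mul_diagonal, Matrix.transpose_apply]
      ring
    rw [h1, h, hJdef, Matrix.diagonal_apply]
  rw [mQ_dot, mQ_dot, Matrix.mulVec_mulVec, Matrix.dotProduct_mulVec, ← Matrix.vecMul_transpose,
    Matrix.vecMul_vecMul, ← Matrix.mul_assoc, hJmat, ← Matrix.dotProduct_mulVec]

lemma mQ_orth {n : ℕ} (Ac : Matrix (Fin (n+1)) (Fin (n+1)) ℂ)
    (hAJAc : ∀ j k, ∑ i, (if i = 0 then (1:ℂ) else -1) * (Ac i j * Ac i k)
      = if j = k then (if j = 0 then (1:ℂ) else -1) else 0)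
    (ν₁ ν₂ : ℂ) (x y : Fin (n+1) → ℂ)
    (hx : Ac *ᵥ x = ν₁ • x) (hy : Ac *ᵥ y = ν₂ • y) (hν : ν₁ * ν₂ ≠ 1) :
    mQ x y = 0 := by
  have h := mQ_iso Ac hAJAc x y
  rw [hx, hy] at h
  have hscale : mQ (ν₁ • x) (ν₂ • y) = ν₁ * ν₂ * mQ x y := by
    unfold mQ
    rw [Finset.mul_sum]
    refine Finset.sum_congr rfl fun i _ => ?_
    simp only [Pi.smul_apply, smul_eq_mul]
    ring
  rw [hscale] at h
  have h2 : (ν₁ * ν₂ - 1) * mQ x y = 0 := by linear_combination h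
  rcases mul_eq_zero.mp h2 with h' | h'
  · exact absurd (by linear_combination h' : ν₁ * ν₂ = 1) hν
  · exact h'

/-- Splitting `mQ w (cast of real vector)` into real and imaginary parts. -/
lemma mQ_split {n : ℕ} (w : Fin (n+1) → ℂ) (r : Fin (n+1) → ℝ) :
    mQ w (fun i => ((r i : ℝ) : ℂ))
      = Complex.ofReal (∑ i, (if i = 0 then (1:ℝ) else -1) * ((w i).re * r i))
        + Complex.I * Complex.ofReal (∑ i, (if i = 0 then (1:ℝ) else -1) * ((w i).im * r i)) := by
  unfold mQ
  rw [Complex.ofReal_sum, Complex.ofReal_sum, Finset.mul_sum, ← Finset.sum_add_distrib]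
  refine Finset.sum_congr rfl fun i _ => ?_
  by_cases hi : i = 0
  · simp only [hi, if_pos rfl, one_mul]
    apply Complex.ext <;> simp <;> ring
  · simp only [if_neg hi, neg_mul]
    apply Complex.ext <;> simp <;> ring

lemma mink_modulus_one {n : ℕ} (A : Matrix (Fin (n+1)) (Fin (n+1)) ℝ)
    (hAJA : ∀ j k, ∑ i, (if i = 0 then (1:ℝ) else -1) * (A i j * A i k)
      = if j = k then (if j = 0 then (1:ℝ) else -1) else 0)
    (lam : ℝ) (hlam : 1 < lam)
    (p q : Fin (n+1) → ℝ) (hp : p ≠ 0) (hq : q ≠ 0)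
    (hAp : A *ᵥ p = lam • p) (hAq : A *ᵥ q = lam⁻¹ • q)
    (hpp : ∑ i, (if i = 0 then (1:ℝ) else -1) * (p i * p i) = 0)
    (hqq : ∑ i, (if i = 0 then (1:ℝ) else -1) * (q i * q i) = 0)
    (μ : ℂ) (hroot : ((A.map (algebraMap ℝ ℂ)).charpoly).IsRoot μ)
    (hμ1 : μ ≠ (lam : ℂ)) (hμ2 : μ ≠ (lam : ℂ)⁻¹) :
    ‖μ‖ = 1 := by
  classical
  by_contra habs
  have hlam0 : lam ≠ 0 := by positivity
  set Ac : Matrix (Fin (n+1)) (Fin (n+1)) ℂ := A.map (algebraMap ℝ ℂ) with hAcdef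
  have hAcapp : ∀ i j, Ac i j = ((A i j : ℝ) : ℂ) := fun i j => rfl
  -- complexified isometry identity
  have hAJAc : ∀ j k, ∑ i, (if i = 0 then (1:ℂ) else -1) * (Ac i j * Ac i k)
      = if j = k then (if j = 0 then (1:ℂ) else -1) else 0 := by
    intro j k
    have h := congrArg (fun r : ℝ => (r : ℂ)) (hAJA j k)
    simp only [Complex.ofReal_sum] at h
    have h2 : ((if j = k then (if j = 0 then (1:ℝ) else -1) else 0 : ℝ) : ℂ)
        = (if j = k then (if j = 0 then (1:ℂ) else -1) else 0) := by
      simp [apply_ite (fun r : ℝ => (r : ℂ))]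
    rw [h2] at h
    rw [← h]
    refine Finset.sum_congr rfl fun i _ => ?_
    simp only [hAcapp]
    push_cast [apply_ite (fun r : ℝ => (r : ℂ))]
    ring
  -- complex eigenvector for μ
  have hdet : (Matrix.scalar (Fin (n+1)) μ - Ac).det = 0 := by
    have h0 : Ac.charpoly.eval μ = 0 := hroot
    rwa [Matrix.charpoly, eval_det, Matrix.matPolyEquiv_charmatrix,
      Polynomial.eval_sub, Polynomial.eval_X, Polynomial.eval_C] at h0
  obtain ⟨w, hwne, hw0⟩ := Matrix.exists_mulVec_eq_zero_iff.mpr hdet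
  have hw : Ac *ᵥ w = μ • w := by
    rw [Matrix.sub_mulVec] at hw0
    have h2 : Matrix.scalar (Fin (n+1)) μ *ᵥ w = μ • w := by
      funext i
      rw [Matrix.scalar_apply, Matrix.mulVec_diagonal]
      simp
    rw [h2] at hw0
    exact (sub_eq_zero.mp hw0).symm
  -- conjugate eigenvector
  set wb : Fin (n+1) → ℂ := fun i => (starRingEnd ℂ) (w i) with hwbdef
  have hwb : Ac *ᵥ wb = ((starRingEnd ℂ) μ) • wb := by
    funext i
    have h2 := congrArg (starRingEnd ℂ) (congrFun hw i)
    simp only [Matrix.mulVec, dotProduct, _root_.map_sum, _root_.map_mul, Pi.smul_apply,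
      smul_eq_mul] at h2 ⊢
    simp only [hAcapp, Complex.conj_ofReal] at h2
    simpa only [hwbdef, hAcapp] using h2
  -- complexified real eigenvectors
  have hcast : ∀ (r : Fin (n+1) → ℝ) (c : ℝ), A *ᵥ r = c • r →
      Ac *ᵥ (fun i => ((r i : ℝ) : ℂ)) = ((c : ℝ) : ℂ) • (fun i => ((r i : ℝ) : ℂ)) := by
    intro r c hr
    funext i
    have h2 := congrArg (fun t : ℝ => (t : ℂ)) (congrFun hr i)
    simp only [Matrix.mulVec, dotProduct, Pi.smul_apply, smul_eq_mul] at h2 ⊢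
    push_cast at h2
    simpa only [hAcapp] using h2
  have hApc := hcast p lam hAp
  have hAqc := hcast q lam⁻¹ hAq
  -- the products of eigenvalues that must avoid 1
  have h1 : μ * μ ≠ 1 := by
    intro h
    have h2 := congrArg (‖·‖) h
    rw [norm_mul, norm_one] at h2
    rcases mul_self_eq_one_iff.mp h2 with h' | h'
    · exact habs h'
    · have := norm_nonneg μ
      linarith
  have h2 : μ * (starRingEnd ℂ) μ ≠ 1 := by
    intro h
    rw [Complex.mul_conj] at h
    have h3 : Complex.normSq μ = 1 := by exact_mod_cast h
    apply habs
    rw [Complex.norm_def, h3, Real.sqrt_one]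
  have hlamC : ((lam : ℝ) : ℂ) ≠ 0 := by exact_mod_cast hlam0
  have h3 : μ * ((lam : ℝ) : ℂ) ≠ 1 := by
    intro h
    exact hμ2 (eq_inv_of_mul_eq_one_left (by linear_combination h))
  have h4 : μ * ((lam⁻¹ : ℝ) : ℂ) ≠ 1 := by
    intro h
    apply hμ1
    rw [Complex.ofReal_inv] at h
    field_simp at h
    exact h
  -- orthogonality relations
  have hQww : mQ w w = 0 := mQ_orth Ac hAJAc μ μ w w hw hw h1
  have hQwwb : mQ w wb = 0 := mQ_orth Ac hAJAc μ _ w wb hw hwb h2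
  have hQwp : mQ w (fun i => ((p i : ℝ) : ℂ)) = 0 := mQ_orth Ac hAJAc μ _ w _ hw hApc h3
  have hQwq : mQ w (fun i => ((q i : ℝ) : ℂ)) = 0 := mQ_orth Ac hAJAc μ _ w _ hw hAqc h4
  -- extract real relations
  have hzero : ∀ r : Fin (n+1) → ℝ, mQ w (fun i => ((r i : ℝ) : ℂ)) = 0 →
      (∑ i, (if i = 0 then (1:ℝ) else -1) * ((w i).re * r i)) = 0 ∧
      (∑ i, (if i = 0 then (1:ℝ) else -1) * ((w i).im * r i)) = 0 := by
    intro r h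
    rw [mQ_split w r] at h
    have hre := congrArg Complex.re h
    have him := congrArg Complex.im h
    simp only [Complex.add_re, Complex.add_im, Complex.ofReal_re, Complex.ofReal_im,
      Complex.mul_re, Complex.mul_im, Complex.I_re, Complex.I_im, Complex.zero_re,
      Complex.zero_im, zero_mul, one_mul, mul_zero, zero_add, add_zero, zero_sub,
      sub_zero, neg_zero] at hre him
    exact ⟨hre, him⟩
  obtain ⟨hxp, hyp⟩ := hzero p hQwp
  obtain ⟨hxq, hyq⟩ := hzero q hQwq
  -- isotropy of the real and imaginary parts of w
  have key1 : (∑ i, (if i = 0 then (1:ℝ) else -1) * ((w i).re * (w i).re))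
      - (∑ i, (if i = 0 then (1:ℝ) else -1) * ((w i).im * (w i).im)) = 0 := by
    have h := congrArg Complex.re hQww
    unfold mQ at h
    rw [Complex.re_sum] at h
    simp only [Complex.zero_re] at h
    rw [← Finset.sum_sub_distrib, ← h]
    refine Finset.sum_congr rfl fun i _ => ?_
    by_cases hi : i = 0 <;> simp [hi, Complex.mul_re] <;> ring
  have key2 : (∑ i, (if i = 0 then (1:ℝ) else -1) * ((w i).re * (w i).re))
      + (∑ i, (if i = 0 then (1:ℝ) else -1) * ((w i).im * (w i).im)) = 0 := by
    have hkey : mQ w wb = ((∑ i, (if i = 0 then (1:ℝ) else -1) *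
        ((w i).re * (w i).re + (w i).im * (w i).im) : ℝ) : ℂ) := by
      unfold mQ
      rw [Complex.ofReal_sum]
      refine Finset.sum_congr rfl fun i _ => ?_
      have hwbi : wb i = (starRingEnd ℂ) (w i) := rfl
      rw [hwbi, Complex.mul_conj, Complex.normSq_apply]
      push_cast [apply_ite (fun r : ℝ => (r : ℂ))]
      ring
    rw [hkey] at hQwwb
    have h5 : (∑ i, (if i = 0 then (1:ℝ) else -1) *
        ((w i).re * (w i).re + (w i).im * (w i).im) : ℝ) = 0 := by exact_mod_cast hQwwb
    rw [← h5, ← Finset.sum_add_distrib]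
    refine Finset.sum_congr rfl fun i _ => ?_
    ring
  have hxx : (∑ i, (if i = 0 then (1:ℝ) else -1) * ((w i).re * (w i).re)) = 0 := by linarith
  have hyy : (∑ i, (if i = 0 then (1:ℝ) else -1) * ((w i).im * (w i).im)) = 0 := by linarith
  -- final contradiction
  have final : ∀ z : Fin (n+1) → ℝ, z ≠ 0 →
      (∑ i, (if i = 0 then (1:ℝ) else -1) * (z i * z i)) = 0 →
      (∑ i, (if i = 0 then (1:ℝ) else -1) * (z i * p i)) = 0 →
      (∑ i, (if i = 0 then (1:ℝ) else -1) * (z i * q i)) = 0 → False := by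
    intro z hz hzz hzp hzq
    obtain ⟨c, hc⟩ := mink_collinear z p hzz hpp hzp hz
    obtain ⟨d, hd⟩ := mink_collinear z q hzz hqq hzq hz
    have hcne : c ≠ 0 := by
      rintro rfl
      rw [zero_smul] at hc
      exact hp hc
    have hqp : q = (d / c) • p := by
      rw [hc, hd, smul_smul]
      congr 1
      field_simp
    have heq : lam⁻¹ • q = lam • q := by
      calc lam⁻¹ • q = A *ᵥ q := hAq.symm
        _ = A *ᵥ ((d / c) • p) := by rw [← hqp]
        _ = (d / c) • (A *ᵥ p) := by rw [Matrix.mulVec_smul]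
        _ = (d / c) • (lam • p) := by rw [hAp]
        _ = lam • ((d / c) • p) := by rw [smul_comm]
        _ = lam • q := by rw [← hqp]
    obtain ⟨i, hqi⟩ : ∃ i, q i ≠ 0 := by
      by_contra hqe; push_neg at hqe; exact hq (funext hqe)
    have hcomp : lam⁻¹ * q i = lam * q i := by
      have := congrFun heq i
      simpa using this
    have hll : lam⁻¹ = lam := mul_right_cancel₀ hqi hcomp
    have h5 : lam⁻¹ < 1 := by
      rw [inv_lt_one_iff₀]; right; exact hlam
    rw [hll] at h5
    linarith
  -- w ≠ 0, so its real or imaginary part is a nonzero vector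
  obtain ⟨i₀, hwi₀⟩ : ∃ i, w i ≠ 0 := by
    by_contra hwe; push_neg at hwe; exact hwne (funext hwe)
  rcases (by
    by_contra hb
    push_neg at hb
    exact hwi₀ (Complex.ext hb.1 hb.2) : (w i₀).re ≠ 0 ∨ (w i₀).im ≠ 0) with hcase | hcase
  · exact final (fun i => (w i).re) (fun h => hcase (congrFun h i₀)) hxx hxp hxq
  · exact final (fun i => (w i).im) (fun h => hcase (congrFun h i₀)) hyy hyp hyq

lemma B_expand {V : Type*} [AddCommGroup V] [Module ℝ V] {n : ℕ}
    (b : Basis (Fin (n + 1)) ℝ V) (B : V →ₗ[ℝ] V →ₗ[ℝ] ℝ)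
    (hsig : ∀ i j, B (b i) (b j) =
      if i = j then (if i = 0 then (1 : ℝ) else -1) else 0)
    (v w : V) :
    B v w = ∑ i, (if i = 0 then (1:ℝ) else -1) * (b.repr v i * b.repr w i) := by
  conv_lhs => rw [← b.sum_repr v, ← b.sum_repr w]
  simp only [_root_.map_sum, LinearMap.sum_apply, _root_.map_smul, LinearMap.smul_apply, smul_eq_mul,
    Finset.mul_sum, hsig, mul_ite, mul_zero, mul_one, mul_neg]
  rw [Finset.sum_comm]
  refine Finset.sum_congr rfl fun i _ => ?_
  rw [Finset.sum_ite_eq Finset.univ i]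
  simp only [Finset.mem_univ, if_true]
  by_cases hi : i = 0 <;> simp [hi] <;> ring

/-- Spectral properties of an isometry of a Minkowski space of signature `(1, n-1)`
with a real eigenvalue `λ > 1`: (a) the `λ`-eigenspace is an isotropic line;
(b) `λ⁻¹` is also an eigenvalue with isotropic eigenspace;
(c) all other complex eigenvalues have modulus 1. -/
theorem minkowski_isometry_spectrum
    {V : Type*} [AddCommGroup V] [Module ℝ V] [FiniteDimensional ℝ V]
    {n : ℕ} (b : Basis (Fin (n + 1)) ℝ V)
    (B : V →ₗ[ℝ] V →ₗ[ℝ] ℝ)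
    (hsymm : ∀ u v, B u v = B v u)
    (hsig : ∀ i j, B (b i) (b j) =
      if i = j then (if i = 0 then (1 : ℝ) else -1) else 0)
    (f : V →ₗ[ℝ] V)
    (hisom : ∀ u v, B (f u) (f v) = B u v)
    (lam : ℝ) (hlam : 1 < lam)
    (heig : Module.End.HasEigenvalue f lam) :
    ((∀ v ∈ Module.End.eigenspace f lam, B v v = 0) ∧
      finrank ℝ ↥(Module.End.eigenspace f lam) = 1) ∧
    (Module.End.HasEigenvalue f lam⁻¹ ∧
      ∀ v ∈ Module.End.eigenspace f lam⁻¹, B v v = 0) ∧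
    (∀ μ : ℂ, ((LinearMap.charpoly f).map (algebraMap ℝ ℂ)).IsRoot μ →
      μ ≠ (lam : ℂ) → μ ≠ (lam : ℂ)⁻¹ → ‖μ‖ = 1) := by
  classical
  have hlam0 : lam ≠ 0 := by positivity
  have hexp := B_expand b B hsig
  -- scaling lemma
  have scale : ∀ (μ : ℝ) (v w : V), f v = μ • v → f w = μ • w → μ * μ ≠ 1 → B v w = 0 := by
    intro μ v w hv hw hμ
    have h := hisom v w
    rw [hv, hw] at h
    simp only [_root_.map_smul, LinearMap.smul_apply, smul_eq_mul] at h
    have : (μ * μ - 1) * B v w = 0 := by linarith [h]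
    rcases mul_eq_zero.mp this with h' | h'
    · exact absurd (by linarith : μ * μ = 1) hμ
    · exact h'
  have hlamsq : lam * lam ≠ 1 := by nlinarith
  have hinvsq : lam⁻¹ * lam⁻¹ ≠ 1 := by
    have h1 : lam⁻¹ < 1 := by
      rw [inv_lt_one_iff₀]; right; exact hlam
    have h2 : 0 < lam⁻¹ := by positivity
    nlinarith
  -- isotropy for eigenvalue lam
  have hisoA : ∀ v ∈ Module.End.eigenspace f lam, B v v = 0 := fun v hv =>
    scale lam v v (Module.End.mem_eigenspace_iff.mp hv) (Module.End.mem_eigenspace_iff.mp hv)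
      hlamsq
  -- eigenvector for lam
  obtain ⟨v₀, hv₀⟩ := heig.exists_hasEigenvector
  have hv₀mem : v₀ ∈ Module.End.eigenspace f lam := hv₀.1
  have hv₀ne : v₀ ≠ 0 := hv₀.2
  have hfv₀ : f v₀ = lam • v₀ := Module.End.mem_eigenspace_iff.mp hv₀mem
  -- nonzero on coords
  have hrepr_ne : ∀ v : V, v ≠ 0 → (fun i => b.repr v i) ≠ 0 := by
    intro v hv h
    apply hv
    have : b.repr v = 0 := by ext i; exact congrFun h i
    simpa using congrArg b.repr.symm this
  -- parts of collinearity
  have hcoll : ∀ v w : V, B v v = 0 → B w w = 0 → B v w = 0 → v ≠ 0 → ∃ c : ℝ, w = c • v := by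
    intro v w hvv hww hvw hv
    obtain ⟨c, hc⟩ := mink_collinear (fun i => b.repr v i) (fun i => b.repr w i)
      (by rw [← hexp v v]; exact hvv) (by rw [← hexp w w]; exact hww)
      (by rw [← hexp v w]; exact hvw) (hrepr_ne v hv)
    refine ⟨c, ?_⟩
    apply b.repr.injective
    ext i
    have := congrFun hc i
    simp only [Pi.smul_apply, smul_eq_mul] at this
    simp [this]
  -- dimension 1
  have hdim : finrank ℝ ↥(Module.End.eigenspace f lam) = 1 := by
    have heq : Module.End.eigenspace f lam = Submodule.span ℝ {v₀} := by
      apply le_antisymm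
      · intro w hw
        have hfw : f w = lam • w := Module.End.mem_eigenspace_iff.mp hw
        have hvw : B v₀ w = 0 := scale lam v₀ w hfv₀ hfw hlamsq
        obtain ⟨c, rfl⟩ := hcoll v₀ w (hisoA v₀ hv₀mem) (hisoA w hw) hvw hv₀ne
        exact Submodule.smul_mem _ c (Submodule.mem_span_singleton_self v₀)
      · rw [Submodule.span_le, Set.singleton_subset_iff]
        exact hv₀mem
    rw [heq]
    exact finrank_span_singleton hv₀ne
  -- nondegeneracy
  have hnd : ∀ v : V, v ≠ 0 → ∃ u, B u v ≠ 0 := by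
    intro v hv
    have hne := hrepr_ne v hv
    have : ∃ i, b.repr v i ≠ 0 := by
      by_contra h
      push_neg at h
      exact hne (funext h)
    obtain ⟨i, hi⟩ := this
    refine ⟨b i, ?_⟩
    rw [hexp]
    have : ∀ j, (if j = 0 then (1:ℝ) else -1) * (b.repr (b i) j * b.repr v j)
        = if i = j then (if j = 0 then (1:ℝ) else -1) * b.repr v j else 0 := by
      intro j
      rw [Basis.repr_self]
      by_cases hij : i = j
      · subst hij; simp
      · simp [Finsupp.single_apply, hij]
    rw [Finset.sum_congr rfl fun j _ => this j, Finset.sum_ite_eq Finset.univ i]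
    simp only [Finset.mem_univ, if_true]
    by_cases hi0 : i = 0
    · subst hi0; simpa using hi
    · simp [hi0, hi]
  -- part (b) : lam⁻¹ is an eigenvalue
  have hinv_eig : Module.End.HasEigenvalue f lam⁻¹ := by
    rw [Module.End.hasEigenvalue_iff]
    intro hbot
    have hker : LinearMap.ker (f - lam⁻¹ • (1 : Module.End ℝ V)) = ⊥ := by
      rw [← Module.End.eigenspace_def]; exact hbot
    have hsurj : Function.Surjective (f - lam⁻¹ • (1 : Module.End ℝ V)) :=
      LinearMap.injective_iff_surjective.mp (LinearMap.ker_eq_bot.mp hker)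
    obtain ⟨u, hBu⟩ := hnd v₀ hv₀ne
    obtain ⟨x, hx⟩ := hsurj u
    have h1 : B (f x) v₀ = lam⁻¹ * B x v₀ := by
      have hv : v₀ = lam⁻¹ • f v₀ := by
        rw [hfv₀, smul_smul, inv_mul_cancel₀ hlam0, one_smul]
      calc B (f x) v₀ = B (f x) (lam⁻¹ • f v₀) := by rw [← hv]
        _ = lam⁻¹ * B (f x) (f v₀) := by rw [_root_.map_smul, smul_eq_mul]
        _ = lam⁻¹ * B x v₀ := by rw [hisom]
    apply hBu
    rw [← hx]
    have hval : (f - lam⁻¹ • (1 : Module.End ℝ V)) x = f x - lam⁻¹ • x := by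
      simp [LinearMap.sub_apply]
    rw [hval, _root_.map_sub, LinearMap.sub_apply, _root_.map_smul, LinearMap.smul_apply, smul_eq_mul, h1]
    ring
  -- isotropy for lam⁻¹
  have hisoB : ∀ v ∈ Module.End.eigenspace f lam⁻¹, B v v = 0 := fun v hv =>
    scale lam⁻¹ v v (Module.End.mem_eigenspace_iff.mp hv) (Module.End.mem_eigenspace_iff.mp hv)
      hinvsq
  refine ⟨⟨hisoA, hdim⟩, ⟨hinv_eig, hisoB⟩, ?_⟩
  intro μ hroot hμ1 hμ2
  obtain ⟨v₁, hv₁⟩ := hinv_eig.exists_hasEigenvector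
  have hv₁ne : v₁ ≠ 0 := hv₁.2
  have hfv₁ : f v₁ = lam⁻¹ • v₁ := Module.End.mem_eigenspace_iff.mp hv₁.1
  set A : Matrix (Fin (n+1)) (Fin (n+1)) ℝ := LinearMap.toMatrix b b f with hAdef
  have hAJA : ∀ j k, ∑ i, (if i = 0 then (1:ℝ) else -1) * (A i j * A i k)
      = if j = k then (if j = 0 then (1:ℝ) else -1) else 0 := by
    intro j k
    have h := hisom (b j) (b k)
    rw [hexp, hsig] at h
    rw [← h]
    refine Finset.sum_congr rfl fun i _ => ?_
    rw [hAdef, LinearMap.toMatrix_apply, LinearMap.toMatrix_apply]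
  have hvec : ∀ (v : V) (c : ℝ), f v = c • v →
      A *ᵥ (fun i => b.repr v i) = c • (fun i => b.repr v i) := by
    intro v c hv
    have h := LinearMap.toMatrix_mulVec_repr b b f v
    rw [← hAdef, hv] at h
    funext i
    have h2 := congrFun h i
    simpa using h2
  have hAp := hvec v₀ lam hfv₀
  have hAq := hvec v₁ lam⁻¹ hfv₁
  have hpp : ∑ i, (if i = 0 then (1:ℝ) else -1) * (b.repr v₀ i * b.repr v₀ i) = 0 := by
    rw [← hexp]; exact hisoA v₀ hv₀mem
  have hqq : ∑ i, (if i = 0 then (1:ℝ) else -1) * (b.repr v₁ i * b.repr v₁ i) = 0 := by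
    rw [← hexp]; exact hisoB v₁ hv₁.1
  have hroot' : ((A.map (algebraMap ℝ ℂ)).charpoly).IsRoot μ := by
    rw [Matrix.charpoly_map, hAdef, LinearMap.charpoly_toMatrix]
    exact hroot
  exact mink_modulus_one A hAJA lam hlam (fun i => b.repr v₀ i) (fun i => b.repr v₁ i)
    (hrepr_ne v₀ hv₀ne) (hrepr_ne v₁ hv₁ne) hAp hAq hpp hqq μ hroot' hμ1 hμ2
end

section
/- For ℓ = (ℓ₀,…,ℓ₄) ∈ (ℂ*)⁵, the ten points q_{ij} ∈ ℙ⁴(ℂ) (for 0 ≤ i < j ≤ 4) defined by ℓᵢ zᵢ + ℓⱼ zⱼ = 0 and z_k = z_l = z_m = 0 (where {i,j,k,l,m} = {0,…,4}) all lie on the surface X_ℓ defined by the equations ℓ₀z₀+⋯+ℓ₄z₄ = 0 and ℓ₀/z₀+⋯+ℓ₄/z₄ = 0 (the second cleared of denominators), and are singular points of X_ℓ. -/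
open Finset

/-- The linear equation `Σ ℓᵢ zᵢ` of the Darboux–pentagon surface. -/
noncomputable def pentF1 (l z : Fin 5 → ℂ) : ℂ := ∑ i, l i * z i

/-- The quartic equation `Σ ℓᵢ ∏_{m ≠ i} z_m` (the equation `Σ ℓᵢ/zᵢ = 0`
cleared of denominators). -/
noncomputable def pentF2 (l z : Fin 5 → ℂ) : ℂ :=
  ∑ i, l i * ∏ m ∈ Finset.univ.erase i, z m

/-- For `ℓ ∈ (ℂ*)⁵` and `i < j`, the point `q_{ij}` (with `z_i = ℓ_j`,
`z_j = -ℓ_i`, other coordinates 0) lies on the surface `X_ℓ` defined by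
`pentF1 = pentF2 = 0`, and is a singular point of it: the differentials of the two
defining equations at `q_{ij}` are linearly dependent (the Jacobian has rank ≤ 1). -/
theorem pentagon_surface_qij_singular
    (l : Fin 5 → ℂ) (hl : ∀ i, l i ≠ 0) (i j : Fin 5) (hij : i ≠ j) :
    let q : Fin 5 → ℂ := fun k => if k = i then l j else if k = j then -l i else 0
    pentF1 l q = 0 ∧ pentF2 l q = 0 ∧ q ≠ 0 ∧
      ¬ LinearIndependent ℂ ![fderiv ℂ (pentF1 l) q, fderiv ℂ (pentF2 l) q] := by
  intro q
  -- any product of values of q over a set with ≥ 3 elements vanishes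
  have hq2 : ∀ s : Finset (Fin 5), 3 ≤ s.card → ∏ m ∈ s, q m = 0 := by
    intro s hs
    have hex : ∃ m ∈ s, q m = 0 := by
      by_contra h
      push_neg at h
      have hsub : s ⊆ {i, j} := by
        intro m hm
        have hne := h m hm
        simp only [q] at hne
        by_cases h1 : m = i
        · simp [h1]
        · by_cases h2 : m = j
          · simp [h2]
          · simp [h1, h2] at hne
      have hc := Finset.card_le_card hsub
      have : ({i, j} : Finset (Fin 5)).card ≤ 2 := Finset.card_insert_le i {j}
      omega
    obtain ⟨m, hm, hm0⟩ := hex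
    exact Finset.prod_eq_zero hm hm0
  have hqi : q i = l j := by simp [q]
  have hqj : q j = -l i := by simp [q, hij.symm]
  refine ⟨?_, ?_, ?_, ?_⟩
  · -- pentF1 vanishes
    have h0 : ∀ k ∈ (univ : Finset (Fin 5)), k ∉ ({i, j} : Finset (Fin 5)) →
        l k * q k = 0 := by
      intro k _ hk
      simp only [Finset.mem_insert, Finset.mem_singleton, not_or] at hk
      simp [q, hk.1, hk.2]
    rw [pentF1, ← Finset.sum_subset (Finset.subset_univ {i, j}) h0]
    rw [Finset.sum_insert (by simp [hij]), Finset.sum_singleton, hqi, hqj]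
    ring
  · -- pentF2 vanishes
    rw [pentF2]
    refine Finset.sum_eq_zero fun n _ => ?_
    rw [hq2 _ (by simp [Finset.card_erase_of_mem]), mul_zero]
  · -- q ≠ 0
    intro h
    exact hl j (by simpa [hqi] using congrFun h i)
  · -- singularity: the differential of pentF2 at q vanishes
    have hD : HasFDerivAt (pentF2 l) (0 : (Fin 5 → ℂ) →L[ℂ] ℂ) q := by
      have hterm : ∀ n ∈ (univ : Finset (Fin 5)),
          HasFDerivAt (fun z : Fin 5 → ℂ => l n * ∏ m ∈ univ.erase n, z m)
            (0 : (Fin 5 → ℂ) →L[ℂ] ℂ) q := by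
        intro n _
        have hp : HasFDerivAt (fun z : Fin 5 → ℂ => ∏ m ∈ univ.erase n, z m)
            (∑ p ∈ univ.erase n, (∏ m ∈ (univ.erase n).erase p, q m) •
              (ContinuousLinearMap.proj p : (Fin 5 → ℂ) →L[ℂ] ℂ)) q :=
          HasFDerivAt.finset_prod fun p _ => hasFDerivAt_apply p q
        have hz : (∑ p ∈ univ.erase n, (∏ m ∈ (univ.erase n).erase p, q m) •
            (ContinuousLinearMap.proj p : (Fin 5 → ℂ) →L[ℂ] ℂ)) = 0 := by
          refine Finset.sum_eq_zero fun p hp' => ?_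
          rw [hq2 _ (by
            rw [Finset.card_erase_of_mem hp', Finset.card_erase_of_mem (Finset.mem_univ n)]
            simp)]
          exact zero_smul ℂ (ContinuousLinearMap.proj p : (Fin 5 → ℂ) →L[ℂ] ℂ)
        rw [hz] at hp
        exact (hp.const_mul (l n)).congr_fderiv (by ext; simp)
      have := HasFDerivAt.fun_sum hterm
      simp only [Finset.sum_const_zero] at this
      exact this
    intro hLI
    have h1 := hLI.ne_zero 1
    rw [show (![fderiv ℂ (pentF1 l) q, fderiv ℂ (pentF2 l) q]) 1 = fderiv ℂ (pentF2 l) q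
      from rfl, hD.fderiv] at h1
    exact h1 rfl
end

section
/- Let ℓ = (ℓ₀,…,ℓ₄) ∈ (ℂ*)⁵. If Σᵢ εᵢ ℓᵢ ≠ 0 for every choice of signs εᵢ ∈ {±1}, then in the affine chart z₀ = 1, the surface defined by ℓ₁/z₁ + ℓ₂/z₂ + ℓ₃/z₃ − ℓ₄²/(ℓ₀ + ℓ₁z₁ + ℓ₂z₂ + ℓ₃z₃) + ℓ₀ = 0 has no singular point with all coordinates z₁, z₂, z₃ and ℓ₀ + ℓ₁z₁ + ℓ₂z₂ + ℓ₃z₃ nonzero. -/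
open Finset

/-- The affine equation of the pentagon surface in the chart `z₀ = 1`. -/
noncomputable def pentAffF (l : Fin 5 → ℂ) (z : Fin 3 → ℂ) : ℂ :=
  l 1 / z 0 + l 2 / z 1 + l 3 / z 2
    - (l 4) ^ 2 / (l 0 + l 1 * z 0 + l 2 * z 1 + l 3 * z 2) + l 0

set_option maxHeartbeats 1600000 in
set_option maxRecDepth 8000 in
/-- If `Σᵢ εᵢ ℓᵢ ≠ 0` for every choice of signs `εᵢ = ±1`, then the affine surface
`pentAffF l = 0` has no singular point (a common zero of the equation and of its
differential) with all coordinates `z₁, z₂, z₃` and `ℓ₀ + ℓ₁z₁ + ℓ₂z₂ + ℓ₃z₃`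
nonzero. -/
theorem pentagon_affine_chart_smooth
    (l : Fin 5 → ℂ) (hl : ∀ i, l i ≠ 0)
    (hsign : ∀ ε : Fin 5 → ℂ, (∀ i, ε i = 1 ∨ ε i = -1) → ∑ i, ε i * l i ≠ 0) :
    ¬ ∃ z : Fin 3 → ℂ, (∀ i, z i ≠ 0) ∧
      (l 0 + l 1 * z 0 + l 2 * z 1 + l 3 * z 2) ≠ 0 ∧
      pentAffF l z = 0 ∧ fderiv ℂ (pentAffF l) z = 0 := by
  rintro ⟨z, hz, hw, hF, hder⟩
  have hl4 := hl 4
  have hdiff : DifferentiableAt ℂ (pentAffF l) z := by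
    unfold pentAffF
    fun_prop (disch := first | exact hz 0 | exact hz 1 | exact hz 2 | exact hw)
  have hF0 : HasFDerivAt (pentAffF l) (0 : (Fin 3 → ℂ) →L[ℂ] ℂ) z := by
    have := hdiff.hasFDerivAt
    rwa [hder] at this
  -- directional derivatives
  have hdir : ∀ v : Fin 3 → ℂ,
      HasDerivAt (fun t : ℂ => pentAffF l (z + t • v)) (0 : ℂ) 0 := by
    intro v
    have hA : HasDerivAt (fun t : ℂ => z + t • v) v 0 := by
      simpa using ((hasDerivAt_id (0:ℂ)).smul_const v).const_add z
    have hF0' : HasFDerivAt (pentAffF l) (0 : (Fin 3 → ℂ) →L[ℂ] ℂ) (z + (0:ℂ) • v) := by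
      have h0 : z + (0:ℂ) • v = z := by simp
      rwa [h0]
    have h := hF0'.comp_hasDerivAt 0 hA
    simp only [ContinuousLinearMap.zero_apply] at h
    exact h
  -- Direction 0
  have E0 : (l 4 * z 0) ^ 2 = (l 0 + l 1 * z 0 + l 2 * z 1 + l 3 * z 2) ^ 2 := by
    have hcomp := hdir (Pi.single 0 1)
    have hfun : (fun t : ℂ => pentAffF l (z + t • (Pi.single 0 (1:ℂ) : Fin 3 → ℂ)))
        = fun t : ℂ => l 1 / (z 0 + t) + l 2 / z 1 + l 3 / z 2
          - (l 4) ^ 2 / (l 0 + l 1 * (z 0 + t) + l 2 * z 1 + l 3 * z 2) + l 0 := by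
      funext t
      simp [pentAffF, Pi.single_apply]
    rw [hfun] at hcomp
    have ht : HasDerivAt (fun t : ℂ => z 0 + t) 1 0 := (hasDerivAt_id 0).const_add (z 0)
    have hz00 : z 0 + (0:ℂ) ≠ 0 := by simpa using hz 0
    have h1 : HasDerivAt (fun t : ℂ => l 1 / (z 0 + t))
        ((0 * (z 0 + 0) - l 1 * 1) / (z 0 + 0) ^ 2) 0 :=
      (hasDerivAt_const 0 (l 1)).div ht hz00
    have hWt : HasDerivAt (fun t : ℂ => l 0 + l 1 * (z 0 + t) + l 2 * z 1 + l 3 * z 2)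
        (l 1 * 1) 0 := ((ht.const_mul (l 1)).const_add (l 0)).add_const _ |>.add_const _
    have hW0 : l 0 + l 1 * (z 0 + 0) + l 2 * z 1 + l 3 * z 2 ≠ 0 := by simpa using hw
    have h4 : HasDerivAt (fun t : ℂ => (l 4) ^ 2 / (l 0 + l 1 * (z 0 + t) + l 2 * z 1 + l 3 * z 2))
        ((0 * (l 0 + l 1 * (z 0 + 0) + l 2 * z 1 + l 3 * z 2) - (l 4) ^ 2 * (l 1 * 1))
          / (l 0 + l 1 * (z 0 + 0) + l 2 * z 1 + l 3 * z 2) ^ 2) 0 :=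
      (hasDerivAt_const 0 ((l 4) ^ 2)).div hWt hW0
    have hg : HasDerivAt (fun t : ℂ => l 1 / (z 0 + t) + l 2 / z 1 + l 3 / z 2
        - (l 4) ^ 2 / (l 0 + l 1 * (z 0 + t) + l 2 * z 1 + l 3 * z 2) + l 0)
        ((0 * (z 0 + 0) - l 1 * 1) / (z 0 + 0) ^ 2
          - (0 * (l 0 + l 1 * (z 0 + 0) + l 2 * z 1 + l 3 * z 2) - (l 4) ^ 2 * (l 1 * 1))
            / (l 0 + l 1 * (z 0 + 0) + l 2 * z 1 + l 3 * z 2) ^ 2) 0 :=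
      (((h1.add_const _).add_const _).sub h4).add_const _
    have heq := hcomp.unique hg
    simp only [add_zero, zero_mul, mul_one, zero_sub] at heq
    have key : l 1 * ((l 4 * z 0) ^ 2) = l 1 * (l 0 + l 1 * z 0 + l 2 * z 1 + l 3 * z 2) ^ 2 := by
      field_simp [hz 0] at heq
      linear_combination -heq
    exact mul_left_cancel₀ (hl 1) key
  -- Direction 1
  have E1 : (l 4 * z 1) ^ 2 = (l 0 + l 1 * z 0 + l 2 * z 1 + l 3 * z 2) ^ 2 := by
    have hcomp := hdir (Pi.single 1 1)
    have hfun : (fun t : ℂ => pentAffF l (z + t • (Pi.single 1 (1:ℂ) : Fin 3 → ℂ)))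
        = fun t : ℂ => l 1 / z 0 + l 2 / (z 1 + t) + l 3 / z 2
          - (l 4) ^ 2 / (l 0 + l 1 * z 0 + l 2 * (z 1 + t) + l 3 * z 2) + l 0 := by
      funext t
      simp [pentAffF, Pi.single_apply]
    rw [hfun] at hcomp
    have ht : HasDerivAt (fun t : ℂ => z 1 + t) 1 0 := (hasDerivAt_id 0).const_add (z 1)
    have hz10 : z 1 + (0:ℂ) ≠ 0 := by simpa using hz 1
    have h1 : HasDerivAt (fun t : ℂ => l 2 / (z 1 + t))
        ((0 * (z 1 + 0) - l 2 * 1) / (z 1 + 0) ^ 2) 0 :=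
      (hasDerivAt_const 0 (l 2)).div ht hz10
    have hWt : HasDerivAt (fun t : ℂ => l 0 + l 1 * z 0 + l 2 * (z 1 + t) + l 3 * z 2)
        (l 2 * 1) 0 := ((ht.const_mul (l 2)).const_add (l 0 + l 1 * z 0)).add_const _
    have hW0 : l 0 + l 1 * z 0 + l 2 * (z 1 + 0) + l 3 * z 2 ≠ 0 := by simpa using hw
    have h4 : HasDerivAt (fun t : ℂ => (l 4) ^ 2 / (l 0 + l 1 * z 0 + l 2 * (z 1 + t) + l 3 * z 2))
        ((0 * (l 0 + l 1 * z 0 + l 2 * (z 1 + 0) + l 3 * z 2) - (l 4) ^ 2 * (l 2 * 1))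
          / (l 0 + l 1 * z 0 + l 2 * (z 1 + 0) + l 3 * z 2) ^ 2) 0 :=
      (hasDerivAt_const 0 ((l 4) ^ 2)).div hWt hW0
    have hg : HasDerivAt (fun t : ℂ => l 1 / z 0 + l 2 / (z 1 + t) + l 3 / z 2
        - (l 4) ^ 2 / (l 0 + l 1 * z 0 + l 2 * (z 1 + t) + l 3 * z 2) + l 0)
        ((0 * (z 1 + 0) - l 2 * 1) / (z 1 + 0) ^ 2
          - (0 * (l 0 + l 1 * z 0 + l 2 * (z 1 + 0) + l 3 * z 2) - (l 4) ^ 2 * (l 2 * 1))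
            / (l 0 + l 1 * z 0 + l 2 * (z 1 + 0) + l 3 * z 2) ^ 2) 0 :=
      (((h1.const_add _).add_const _).sub h4).add_const _
    have heq := hcomp.unique hg
    simp only [add_zero, zero_mul, mul_one, zero_sub] at heq
    have key : l 2 * ((l 4 * z 1) ^ 2) = l 2 * (l 0 + l 1 * z 0 + l 2 * z 1 + l 3 * z 2) ^ 2 := by
      field_simp [hz 1] at heq
      linear_combination -heq
    exact mul_left_cancel₀ (hl 2) key
  -- Direction 2
  have E2 : (l 4 * z 2) ^ 2 = (l 0 + l 1 * z 0 + l 2 * z 1 + l 3 * z 2) ^ 2 := by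
    have hcomp := hdir (Pi.single 2 1)
    have hfun : (fun t : ℂ => pentAffF l (z + t • (Pi.single 2 (1:ℂ) : Fin 3 → ℂ)))
        = fun t : ℂ => l 1 / z 0 + l 2 / z 1 + l 3 / (z 2 + t)
          - (l 4) ^ 2 / (l 0 + l 1 * z 0 + l 2 * z 1 + l 3 * (z 2 + t)) + l 0 := by
      funext t
      simp [pentAffF, Pi.single_apply]
    rw [hfun] at hcomp
    have ht : HasDerivAt (fun t : ℂ => z 2 + t) 1 0 := (hasDerivAt_id 0).const_add (z 2)
    have hz20 : z 2 + (0:ℂ) ≠ 0 := by simpa using hz 2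
    have h1 : HasDerivAt (fun t : ℂ => l 3 / (z 2 + t))
        ((0 * (z 2 + 0) - l 3 * 1) / (z 2 + 0) ^ 2) 0 :=
      (hasDerivAt_const 0 (l 3)).div ht hz20
    have hWt : HasDerivAt (fun t : ℂ => l 0 + l 1 * z 0 + l 2 * z 1 + l 3 * (z 2 + t))
        (l 3 * 1) 0 := (ht.const_mul (l 3)).const_add (l 0 + l 1 * z 0 + l 2 * z 1)
    have hW0 : l 0 + l 1 * z 0 + l 2 * z 1 + l 3 * (z 2 + 0) ≠ 0 := by simpa using hw
    have h4 : HasDerivAt (fun t : ℂ => (l 4) ^ 2 / (l 0 + l 1 * z 0 + l 2 * z 1 + l 3 * (z 2 + t)))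
        ((0 * (l 0 + l 1 * z 0 + l 2 * z 1 + l 3 * (z 2 + 0)) - (l 4) ^ 2 * (l 3 * 1))
          / (l 0 + l 1 * z 0 + l 2 * z 1 + l 3 * (z 2 + 0)) ^ 2) 0 :=
      (hasDerivAt_const 0 ((l 4) ^ 2)).div hWt hW0
    have hg : HasDerivAt (fun t : ℂ => l 1 / z 0 + l 2 / z 1 + l 3 / (z 2 + t)
        - (l 4) ^ 2 / (l 0 + l 1 * z 0 + l 2 * z 1 + l 3 * (z 2 + t)) + l 0)
        ((0 * (z 2 + 0) - l 3 * 1) / (z 2 + 0) ^ 2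
          - (0 * (l 0 + l 1 * z 0 + l 2 * z 1 + l 3 * (z 2 + 0)) - (l 4) ^ 2 * (l 3 * 1))
            / (l 0 + l 1 * z 0 + l 2 * z 1 + l 3 * (z 2 + 0)) ^ 2) 0 :=
      ((h1.const_add _).sub h4).add_const _
    have heq := hcomp.unique hg
    simp only [add_zero, zero_mul, mul_one, zero_sub] at heq
    have key : l 3 * ((l 4 * z 2) ^ 2) = l 3 * (l 0 + l 1 * z 0 + l 2 * z 1 + l 3 * z 2) ^ 2 := by
      field_simp [hz 2] at heq
      linear_combination -heq
    exact mul_left_cancel₀ (hl 3) key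
  -- Algebraic endgame
  obtain ⟨w, hwdef⟩ : ∃ w : ℂ, w = l 0 + l 1 * z 0 + l 2 * z 1 + l 3 * z 2 := ⟨_, rfl⟩
  rw [← hwdef] at hw E0 E1 E2
  have hs : ∀ i : Fin 3, (l 4 * z i) ^ 2 = w ^ 2 → ∃ s : ℂ, (s = 1 ∨ s = -1) ∧ l 4 * z i = s * w := by
    intro i hE
    have h : (l 4 * z i - w) * (l 4 * z i + w) = 0 := by linear_combination hE
    rcases mul_eq_zero.mp h with h | h
    · exact ⟨1, Or.inl rfl, by linear_combination h⟩
    · exact ⟨-1, Or.inr rfl, by linear_combination h⟩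
  obtain ⟨s0, hs0, he0⟩ := hs 0 E0
  obtain ⟨s1, hs1, he1⟩ := hs 1 E1
  obtain ⟨s2, hs2, he2⟩ := hs 2 E2
  have hq0 : s0 ^ 2 = 1 := by rcases hs0 with h | h <;> rw [h] <;> ring
  have hq1 : s1 ^ 2 = 1 := by rcases hs1 with h | h <;> rw [h] <;> ring
  have hq2 : s2 ^ 2 = 1 := by rcases hs2 with h | h <;> rw [h] <;> ring
  -- clear denominators in F = 0
  rw [pentAffF] at hF
  rw [← hwdef] at hF
  have hFp : l 1 * z 1 * z 2 * w + l 2 * z 0 * z 2 * w + l 3 * z 0 * z 1 * w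
      - l 4 ^ 2 * (z 0 * z 1 * z 2) + l 0 * (z 0 * z 1 * z 2) * w = 0 := by
    field_simp [hz 0, hz 1, hz 2, hw] at hF
    linear_combination hF
  have hK1s : l 4 * (l 1 * s1 * s2 + l 2 * s0 * s2 + l 3 * s0 * s1)
      - l 4 ^ 2 * (s0 * s1 * s2) + l 0 * (s0 * s1 * s2) * w = 0 := by
    apply mul_left_cancel₀ (pow_ne_zero 3 hw)
    rw [mul_zero]
    linear_combination (l 4 ^ 3) * hFp
      - (w * l 4 * l 1 * (l 4 * z 1) + w * l 4 * l 2 * (l 4 * z 0)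
          + (l 0 * w - l 4 ^ 2) * (l 4 * z 0) * (l 4 * z 1)) * he2
      - (w ^ 2 * l 4 * l 1 * s2 + w * l 4 * l 3 * (l 4 * z 0)
          + (l 0 * w - l 4 ^ 2) * (l 4 * z 0) * s2 * w) * he1
      - (w ^ 2 * l 4 * (l 2 * s2 + l 3 * s1) + (l 0 * w - l 4 ^ 2) * s1 * s2 * w ^ 2) * he0
  have hK1 : l 4 * (l 1 * s0 + l 2 * s1 + l 3 * s2) - l 4 ^ 2 + l 0 * w = 0 := by
    linear_combination (s0 * s1 * s2) * hK1s
      - (l 4 * l 1 * s0 * s2 ^ 2 + l 4 * l 3 * s2 * s0 ^ 2 + (l 0 * w - l 4 ^ 2) * s0 ^ 2) * hq1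
      - (l 4 * l 1 * s0 + l 4 * l 2 * s1 + (l 0 * w - l 4 ^ 2) * s0 ^ 2 * s1 ^ 2) * hq2
      - (l 4 * l 2 * s1 * s2 ^ 2 + l 4 * l 3 * s2 + (l 0 * w - l 4 ^ 2)) * hq0
  have hK2 : l 4 * w = l 4 * l 0 + (l 1 * s0 + l 2 * s1 + l 3 * s2) * w := by
    linear_combination l 4 * hwdef + l 1 * he0 + l 2 * he1 + l 3 * he2
  have hw2 : (w - l 4) * (w + l 4) = 0 := by
    apply mul_left_cancel₀ (hl 0)
    rw [mul_zero]
    linear_combination w * hK1 + l 4 * hK2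
  have final : ∀ d : ℂ, w = d * l 4 → (d = 1 ∨ d = -1) → False := by
    intro d hwl hd
    refine hsign ![d, s0, s1, s2, -1] ?_ ?_
    · intro i
      fin_cases i <;> simp [hd, hs0, hs1, hs2]
    · rw [Fin.sum_univ_five]
      simp only [Matrix.cons_val_zero, Matrix.cons_val_one, Matrix.head_cons,
        Matrix.cons_val_two, Matrix.tail_cons, Matrix.cons_val_three, Matrix.cons_val_four]
      apply mul_left_cancel₀ hl4
      rw [mul_zero]
      linear_combination hK1 - l 0 * hwl
  rcases mul_eq_zero.mp hw2 with h | h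
  · exact final 1 (by linear_combination h) (Or.inl rfl)
  · exact final (-1) (by linear_combination h) (Or.inr rfl)
end

section
/- Let X be a real vector space of finite dimension with basis (e₀, e_q, e_{p₁}, e_{p₂}, e_{p₃}, e_{p₄}), equipped with the symmetric bilinear form making the basis orthogonal with e₀² = 1 and e_q² = e_{pⱼ}² = −1. Then the linear map σ* given by the 6×6 matrix [[3,2,1,1,1,1],[−2,−1,−1,−1,−1,−1],[−1,−1,−1,0,0,0],[−1,−1,0,−1,0,0],[−1,−1,0,0,−1,0],[−1,−1,0,0,0,−1]] is an involution (σ*² = Id) and preserves the bilinear form; moreover its fixed subspace is exactly {d e₀ − (d−2m) e_q − m(e_{p₁}+e_{p₂}+e_{p₃}+e_{p₄}) : d, m ∈ ℝ}, which is 2-dimensional. -/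
/-!
The intersection form `η = diag(1, -1, …, -1)` turns `σ = jonqMat` into the symmetric matrix
`η σ`, i.e. `σ` is self-adjoint for the form. A self-adjoint involution is an isometry:
`σᵀ η σ = (η σ)ᵀ σ = η σ σ = η`. The fixed vectors solve `2 xᵢ = -(x₀ + x₁)` for `i ≥ 2`,
which leaves `d = x₀` and `m = -x₂` free; the fixed subspace is therefore spanned by
`e₀ - e_q` and `2 e_q - (e_{p₁} + ⋯ + e_{p₄})`.
-/

open Matrix Module

/-- The matrix of the Jonquières involution on the Néron–Severi lattice. -/
def jonqMat : Matrix (Fin 6) (Fin 6) ℝ :=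
  !![3, 2, 1, 1, 1, 1;
     -2, -1, -1, -1, -1, -1;
     -1, -1, -1, 0, 0, 0;
     -1, -1, 0, -1, 0, 0;
     -1, -1, 0, 0, -1, 0;
     -1, -1, 0, 0, 0, -1]

/-- The intersection form `diag(1, -1, -1, -1, -1, -1)`. -/
def minkMat : Matrix (Fin 6) (Fin 6) ℝ :=
  Matrix.diagonal (fun i => if i = 0 then 1 else -1)

theorem Matrix.transpose_mul_mul_self_eq_of_isSymm {n R : Type*} [Fintype n] [DecidableEq n]
    [CommSemiring R] {η σ : Matrix n n R} (hη : η.IsSymm) (hησ : (η * σ).IsSymm)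
    (hσ : σ * σ = 1) : σᵀ * η * σ = η :=
  calc σᵀ * η * σ = (η * σ)ᵀ * σ := by rw [transpose_mul, hη.eq]
    _ = η := by rw [hησ.eq, Matrix.mul_assoc, hσ, Matrix.mul_one]

theorem jonqMat_mul_self : jonqMat * jonqMat = 1 := by
  ext i j
  fin_cases i <;> fin_cases j <;> norm_num [jonqMat, mul_apply, Fin.sum_univ_succ, one_apply]

theorem isSymm_minkMat : minkMat.IsSymm :=
  isSymm_diagonal _

theorem isSymm_minkMat_mul_jonqMat : (minkMat * jonqMat).IsSymm := by
  ext i j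
  fin_cases i <;> fin_cases j <;> norm_num [jonqMat, minkMat, diagonal_mul]

theorem jonqMat_mulVec_eq_self_iff (x : Fin 6 → ℝ) :
    jonqMat *ᵥ x = x ↔ ∃ d m : ℝ, x = ![d, -(d - 2 * m), -m, -m, -m, -m] := by
  simp only [jonqMat, funext_iff, Fin.forall_fin_succ, cons_mulVec, cons_dotProduct, vecHead,
    vecTail, Function.comp_apply, dotProduct_of_isEmpty, empty_mulVec, cons_val_zero,
    cons_val_succ, Fin.succ_zero_eq_one, Fin.succ_one_eq_two, IsEmpty.forall_iff, and_true]
  constructor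
  · rintro ⟨-, -, h2, h3, h4, h5⟩
    exact ⟨x 0, -x 2, rfl, by linarith, by linarith, by linarith, by linarith, by linarith⟩
  · rintro ⟨d, m, h0, h1, h2, h3, h4, h5⟩
    refine ⟨?_, ?_, ?_, ?_, ?_, ?_⟩ <;> linarith

def jonqFixedVec : Fin 2 → Fin 6 → ℝ :=
  ![![1, -1, 0, 0, 0, 0], ![0, 2, -1, -1, -1, -1]]

theorem jonqFixedVec_combination (d m : ℝ) :
    d • jonqFixedVec 0 + m • jonqFixedVec 1 = ![d, -(d - 2 * m), -m, -m, -m, -m] := by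
  ext i
  fin_cases i <;> simp [jonqFixedVec, neg_add_eq_sub, mul_comm]

theorem eigenspace_toLin'_jonqMat_one :
    End.eigenspace (toLin' jonqMat) 1 = Submodule.span ℝ (Set.range jonqFixedVec) := by
  ext x
  rw [End.mem_eigenspace_iff, one_smul, toLin'_apply, jonqMat_mulVec_eq_self_iff, jonqFixedVec,
    range_cons_cons_empty, Submodule.mem_span_pair]
  exact exists₂_congr fun d m => by rw [← jonqFixedVec_combination]; exact eq_comm

theorem linearIndependent_jonqFixedVec : LinearIndependent ℝ jonqFixedVec := by
  refine LinearIndependent.pair_iff.mpr fun s t h => ⟨?_, ?_⟩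
  · simpa using congrFun h 0
  · simpa using congrFun h 2

/-- The Jonquières matrix is an involution, preserves the Minkowski intersection form
`diag(1,−1,…,−1)`, and its fixed subspace is exactly the 2-dimensional space of
vectors `d e₀ − (d−2m) e_q − m (e_{p₁}+e_{p₂}+e_{p₃}+e_{p₄})`. -/
theorem jonquieres_matrix_involution :
    jonqMat * jonqMat = 1 ∧
    jonqMatᵀ * minkMat * jonqMat = minkMat ∧
    (∀ x : Fin 6 → ℝ, jonqMat.mulVec x = x ↔
      ∃ d m : ℝ, x = ![d, -(d - 2 * m), -m, -m, -m, -m]) ∧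
    finrank ℝ ↥(Module.End.eigenspace (Matrix.toLin' jonqMat) 1) = 2 := by
  refine ⟨jonqMat_mul_self, ?_, jonqMat_mulVec_eq_self_iff, ?_⟩
  · exact transpose_mul_mul_self_eq_of_isSymm isSymm_minkMat isSymm_minkMat_mul_jonqMat
      jonqMat_mul_self
  · rw [eigenspace_toLin'_jonqMat_one, finrank_span_eq_card linearIndependent_jonqFixedVec,
      Fintype.card_fin]
end
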